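/- For a positive integer m = \sum_{i=0}^{s} 2^{t_i} with t_0 > t_1 > ... > t_s \ge 0, define ex(m) = \sum_{i=0}^{s} t_i 2^{t_i} + \sum_{i=0}^{s} 2 i 2^{t_i}. Then for all integers 1 \le m \le 2^t, one has ex(m) \le t m. -/

import Mathlib

/-!
Splitting off the leading bit, `m = 2^a + m'` with `m' < 2^a`, gives
`ex(m) = a 2^a + ex(m') + 2 m'`. By induction on the number of bits this yields the sharper
bound `ex(m) + 2^(a+1) ≤ (a + 2) m` for `2^a ≤ m < 2^(a+1)`. The elementary inequality
`(a + 2) m ≤ T m + 2^(a+1)` for `m ≤ 2^T` then closes both the induction step (with `T` the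
previous leading exponent) and the theorem.
-/

open Finset

/-- `ex t` is the paper's `ex(m)` for `m = ∑ i, 2 ^ t i`, the exponents `t i` listed in
decreasing order. -/
def ex {n : ℕ} (t : Fin n → ℕ) : ℕ :=
  ∑ i, t i * 2 ^ t i + ∑ i : Fin n, 2 * (i : ℕ) * 2 ^ t i

theorem ex_cons {n : ℕ} (a : ℕ) (t : Fin n → ℕ) :
    ex (Fin.cons a t : Fin (n + 1) → ℕ) = a * 2 ^ a + ex t + 2 * ∑ i, 2 ^ t i := by
  simp only [ex, Fin.sum_univ_succ, Fin.cons_zero, Fin.cons_succ, Fin.val_zero, Fin.val_succ,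
    mul_add, add_mul, sum_add_distrib, mul_sum]
  ring

theorem two_pow_head_le_sum {n : ℕ} (t : Fin (n + 1) → ℕ) : 2 ^ t 0 ≤ ∑ i, 2 ^ t i :=
  single_le_sum (f := fun i => 2 ^ t i) (fun _ _ => Nat.zero_le _) (mem_univ 0)

theorem sum_two_pow_lt_two_pow_head_succ {n : ℕ} {t : Fin (n + 1) → ℕ} (ht : StrictAnti t) :
    ∑ i, 2 ^ t i < 2 ^ (t 0 + 1) := by
  rw [← sum_image (f := (2 ^ ·)) fun i _ j _ h => ht.injective h]
  refine Nat.geomSum_lt le_rfl fun k hk => ?_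
  obtain ⟨i, -, rfl⟩ := mem_image.1 hk
  exact Nat.lt_succ_of_le (ht.antitone (Fin.zero_le i))

/-- Either `m = 2^a` and `a ≤ T`, or `m > 2^a` forces `a < T`. -/
theorem add_two_mul_le_mul_add_two_pow {a T m : ℕ} (hlo : 2 ^ a ≤ m) (hhi : m < 2 ^ (a + 1))
    (hT : m ≤ 2 ^ T) : (a + 2) * m ≤ T * m + 2 ^ (a + 1) := by
  rcases hlo.eq_or_lt with rfl | hlt
  · have haT : a ≤ T := (Nat.pow_le_pow_iff_right one_lt_two).1 hT
    have := Nat.mul_le_mul_right (2 ^ a) haT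
    rw [pow_succ]
    linarith
  · have haT : a + 1 ≤ T := (Nat.pow_lt_pow_iff_right (by norm_num)).1 (hlt.trans_le hT)
    have := Nat.mul_le_mul_right m haT
    linarith

theorem ex_add_two_pow_head_succ_le {n : ℕ} (t : Fin (n + 1) → ℕ) (ht : StrictAnti t) :
    ex t + 2 ^ (t 0 + 1) ≤ (t 0 + 2) * ∑ i, 2 ^ t i := by
  induction n with
  | zero =>
    simp [ex, pow_succ, add_mul]
    linarith
  | succ n ih =>
    obtain ⟨a, u, rfl⟩ : ∃ a u, t = Fin.cons a u := ⟨t 0, Fin.tail t, (Fin.cons_self_tail t).symm⟩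
    have hu : StrictAnti u := fun i j hij => ht (Fin.succ_lt_succ_iff.2 hij)
    have hua : u 0 < a := ht (Fin.succ_pos 0)
    have hsum : ∑ i, 2 ^ (Fin.cons a u : Fin (n + 2) → ℕ) i = 2 ^ a + ∑ i, 2 ^ u i :=
      Fin.sum_univ_succ _
    have hsum_lt := sum_two_pow_lt_two_pow_head_succ hu
    have hstep := add_two_mul_le_mul_add_two_pow (two_pow_head_le_sum u) hsum_lt
      (hsum_lt.le.trans (Nat.pow_le_pow_right two_pos hua))
    have ih_u := ih u hu
    rw [ex_cons, hsum, Fin.cons_zero, pow_succ]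
    linarith

theorem ex_le_general (s T m : ℕ) (t : Fin (s+1) → ℕ) (ht : StrictAnti t)
    (hm : m = ∑ i, 2 ^ (t i)) (h2 : m ≤ 2 ^ T) :
    (∑ i, t i * 2 ^ (t i)) + (∑ i : Fin (s+1), 2 * (i : ℕ) * 2 ^ (t i)) ≤ T * m := by
  subst hm
  have hkey := ex_add_two_pow_head_succ_le t ht
  have harith := add_two_mul_le_mul_add_two_pow (two_pow_head_le_sum t)
    (sum_two_pow_lt_two_pow_head_succ ht) h2
  change ex t ≤ T * _
  linarith

open Finset in
/-- If `m = ∑_{i=0}^{s} 2^{t_i}` with `t_0 > t_1 > ... > t_s ≥ 0` and `1 ≤ m ≤ 2^T`,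
then `ex(m) = ∑ t_i 2^{t_i} + ∑ 2 i 2^{t_i} ≤ T m`. -/
theorem ex_le (s T m : ℕ) (t : Fin (s+1) → ℕ) (ht : StrictAnti t)
    (hm : m = ∑ i, 2 ^ (t i)) (h1 : 1 ≤ m) (h2 : m ≤ 2 ^ T) :
    (∑ i, t i * 2 ^ (t i)) + (∑ i : Fin (s+1), 2 * (i : ℕ) * 2 ^ (t i)) ≤ T * m :=
  ex_le_general s T m t ht hm h2
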